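/- Let G be a graph isomorphic to the hypercube Q_h, let v ∈ V(G), and let α : V(G) → B^h be a map satisfying: α(v) = 0^h; α restricted to N(v) is injective and α(z) has weight 1 for every z ∈ N(v); and α(u) = ∨_{z∈N^v(u)} α(z) for every u ∈ V(G) \ N[v]. Then α is an isometric embedding of G into Q_h. Moreover, if α' is another map satisfying these conditions with α'(z) = α(z) for every z ∈ N[v], then α' = α. -/

import Mathlib

open SimpleGraph

/-- The hypercube `Q_h` on binary words of length `h`: two words are adjacent
iff their Hamming distance is `1`. -/
def Qcube (h : ℕ) : SimpleGraph (Fin h → Bool) where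
  Adj u v := hammingDist u v = 1
  symm := ⟨fun u v huv => by rwa [hammingDist_comm]⟩
  loopless := ⟨fun u hu => by simp [hammingDist_self] at hu⟩

/-- Vertex set of the daisy cube `Q_h(X)`: all words below some element of `X`. -/
def daisyVerts {h : ℕ} (X : Set (Fin h → Bool)) : Set (Fin h → Bool) :=
  {v | ∃ x ∈ X, v ≤ x}

/-- The daisy cube `Q_h(X)`, the subgraph of `Q_h` induced by `daisyVerts X`. -/
def daisyGraph {h : ℕ} (X : Set (Fin h → Bool)) : SimpleGraph (daisyVerts X) :=
  SimpleGraph.induce (daisyVerts X) (Qcube h)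

/-- `\widehat X`: the set of maximal elements of the poset `(X, ≤)`. -/
def maxSet {h : ℕ} (X : Set (Fin h → Bool)) : Set (Fin h → Bool) :=
  {x ∈ X | ∀ y ∈ X, x ≤ y → x = y}

/-- The all-zeros word `0^h`. -/
def zeroW (h : ℕ) : Fin h → Bool := fun _ => false

/-- Bitwise XOR of words. -/
def xorW {h : ℕ} (u v : Fin h → Bool) : Fin h → Bool := fun i => xor (u i) (v i)

/-- Bitwise AND of words. -/
def andW {h : ℕ} (u v : Fin h → Bool) : Fin h → Bool := fun i => u i && v i

/-- The weight `w(u)`: the number of ones of a word. -/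
def weightW {h : ℕ} (u : Fin h → Bool) : ℕ :=
  (Finset.univ.filter fun i => u i = true).card

/-- The interval `I_G(u,v)`: vertices lying on shortest `u,v`-paths. -/
def gInterval {V : Type*} (G : SimpleGraph V) (u v : V) : Set V :=
  {w | G.dist u w + G.dist w v = G.dist u v}

/-- `N^u(v)`: neighbors of `v` that are closer to `u` than `v` is. -/
def lowerNbrs {V : Type*} (G : SimpleGraph V) (u v : V) : Set V :=
  {z | G.Adj v z ∧ G.dist u z + 1 = G.dist u v}

/-- `α` is an isometric embedding of `G` into `Q_h`. -/
def IsIsomEmb {V : Type*} (G : SimpleGraph V) {h : ℕ} (α : V → Fin h → Bool) : Prop :=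
  ∀ a b, hammingDist (α a) (α b) = G.dist a b

/-- `α` is a proper embedding of `G` into `Q_h`: an isometric embedding such that
`G` is isomorphic to the daisy cube generated by the image of `α`. -/
def IsProperEmb {V : Type*} (G : SimpleGraph V) {h : ℕ} (α : V → Fin h → Bool) : Prop :=
  IsIsomEmb G α ∧ Nonempty (G ≃g daisyGraph (Set.range α))

/-- `v` is a minimal vertex of `G`: some proper embedding sends `v` to `0^h`. -/
def IsMinVertex {V : Type*} (G : SimpleGraph V) (h : ℕ) (v : V) : Prop :=
  ∃ α : V → Fin h → Bool, IsProperEmb G α ∧ α v = zeroW h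

/-- The labeling conditions of Proposition `cubes`/Lemma `partial`: `α v = 0^h`,
the neighbors of `v` get pairwise distinct weight-one labels, and every other
vertex gets the bitwise OR of the labels of its down-neighbors. -/
def goodLabeling {V : Type*} (G : SimpleGraph V) {h : ℕ} (v : V)
    (α : V → Fin h → Bool) : Prop :=
  α v = zeroW h ∧
  Set.InjOn α (G.neighborSet v) ∧
  (∀ z ∈ G.neighborSet v, weightW (α z) = 1) ∧
  (∀ u ∉ insert v (G.neighborSet v),
    ∀ i, α u i = true ↔ ∃ z ∈ lowerNbrs G v u, α z i = true)



section Helpers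
open Finset
lemma qcube_adj {h : ℕ} {u w : Fin h → Bool} :
    (Qcube h).Adj u w ↔ hammingDist u w = 1 := Iff.rfl

lemma hammingDist_eq_card {h : ℕ} (u w : Fin h → Bool) :
    hammingDist u w = (Finset.univ.filter fun j => u j ≠ w j).card := rfl

lemma wt_eq {h : ℕ} (x : Fin h → Bool) :
    hammingDist (zeroW h) x = (Finset.univ.filter fun i => x i = true).card := by
  rw [hammingDist_eq_card]
  congr 1
  apply Finset.filter_congr
  intro i _
  cases hx : x i <;> simp [zeroW, hx]

def eW {h : ℕ} (j : Fin h) : Fin h → Bool := fun i => decide (i = j)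

lemma weight_one_iff {h : ℕ} {x : Fin h → Bool} :
    hammingDist (zeroW h) x = 1 ↔ ∃ j, x = eW j := by
  rw [wt_eq, Finset.card_eq_one]
  constructor
  · rintro ⟨j, hj⟩
    refine ⟨j, funext fun i => ?_⟩
    by_cases hij : i = j
    · subst hij
      have hmem : i ∈ ({i} : Finset (Fin h)) := Finset.mem_singleton_self i
      rw [← hj, Finset.mem_filter] at hmem
      simp [eW, hmem.2]
    · have hmem : i ∉ ({j} : Finset (Fin h)) := by simpa using hij
      rw [← hj, Finset.mem_filter] at hmem
      simp only [Finset.mem_univ, true_and] at hmem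
      have hx : x i = false := by simpa using hmem
      simp [eW, hij, hx]
  · rintro ⟨j, rfl⟩
    refine ⟨j, ?_⟩
    ext i
    simp [eW]

lemma wt_eW {h : ℕ} (j : Fin h) : hammingDist (zeroW h) (eW j) = 1 :=
  weight_one_iff.mpr ⟨j, rfl⟩

lemma update_facts {h : ℕ} {y : Fin h → Bool} {m : Fin h} (hm : y m = true) :
    hammingDist (Function.update y m false) y = 1 ∧
    hammingDist (zeroW h) (Function.update y m false) + 1 = hammingDist (zeroW h) y := by
  set x := Function.update y m false with hxdef
  have hxm : x m = false := by simp [hxdef]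
  have hxj : ∀ j, j ≠ m → x j = y j := by
    intro j hj; simp [hxdef, Function.update_of_ne hj]
  have hx1 : (Finset.univ.filter fun j => x j ≠ y j) = {m} := by
    ext j
    simp only [mem_filter, mem_univ, true_and, mem_singleton]
    constructor
    · intro hj
      by_contra hjm
      exact hj (hxj j hjm)
    · rintro rfl
      rw [hxm, hm]; simp
  have hx2 : (Finset.univ.filter fun j => x j = true)
      = (Finset.univ.filter fun j => y j = true).erase m := by
    ext j
    simp only [mem_filter, mem_univ, true_and, mem_erase]
    constructor
    · intro hj
      have hjm : j ≠ m := by rintro rfl; rw [hxm] at hj; exact Bool.false_ne_true hj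
      exact ⟨hjm, (hxj j hjm) ▸ hj⟩
    · rintro ⟨hjm, hj⟩
      rwa [hxj j hjm]
  constructor
  · rw [hammingDist_eq_card, hx1, Finset.card_singleton]
  · rw [wt_eq, wt_eq, hx2, Finset.card_erase_of_mem (by simp [hm])]
    have hpos : 0 < (Finset.univ.filter fun j => y j = true).card :=
      Finset.card_pos.mpr ⟨m, by simp [hm]⟩
    omega

lemma step_le {h : ℕ} {x y : Fin h → Bool} (h1 : hammingDist x y = 1)
    (h2 : hammingDist (zeroW h) x + 1 = hammingDist (zeroW h) y) :
    ∀ i, x i = true → y i = true := by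
  rw [hammingDist_eq_card, Finset.card_eq_one] at h1
  obtain ⟨m, hm⟩ := h1
  have hdiff : ∀ j, x j ≠ y j ↔ j = m := by
    intro j
    rw [← Finset.mem_singleton, ← hm, Finset.mem_filter]
    simp
  by_cases hxm : x m = true
  · exfalso
    have hym : y m = false := by
      have hne := (hdiff m).mpr rfl
      rw [hxm] at hne
      cases hy : y m with
      | false => rfl
      | true => rw [hy] at hne; exact absurd rfl hne
    have hset : (Finset.univ.filter fun j => y j = true)
        = (Finset.univ.filter fun j => x j = true).erase m := by
      ext j
      simp only [mem_filter, mem_univ, true_and, mem_erase]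
      constructor
      · intro hj
        have hjm : j ≠ m := by rintro rfl; rw [hym] at hj; exact Bool.false_ne_true hj
        have hxy : x j = y j := by by_contra hne; exact hjm ((hdiff j).mp hne)
        exact ⟨hjm, hxy ▸ hj⟩
      · rintro ⟨hjm, hj⟩
        have hxy : x j = y j := by by_contra hne; exact hjm ((hdiff j).mp hne)
        rwa [← hxy]
    rw [wt_eq, wt_eq, hset, Finset.card_erase_of_mem (by simp [hxm])] at h2
    have hpos : 0 < (Finset.univ.filter fun j => x j = true).card :=
      Finset.card_pos.mpr ⟨m, by simp [hxm]⟩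
    omega
  · intro i hi
    have him : i ≠ m := by rintro rfl; exact hxm hi
    have hxy : x i = y i := by by_contra hne; exact him ((hdiff i).mp hne)
    rwa [← hxy]

lemma exists_qwalk {h : ℕ} : ∀ (n : ℕ) (u w : Fin h → Bool), hammingDist u w = n →
    ∃ p : (Qcube h).Walk u w, p.length = n
  | 0, u, w, hn => by
      obtain rfl := eq_of_hammingDist_eq_zero hn
      exact ⟨.nil, rfl⟩
  | n+1, u, w, hn => by
      have hne : u ≠ w := by
        intro e; subst e; rw [hammingDist_self] at hn; exact absurd hn (by omega)
      obtain ⟨i, hi⟩ : ∃ i, u i ≠ w i := Function.ne_iff.mp hne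
      set u' := Function.update u i (w i) with hu'
      have hui : u' i = w i := by simp [hu']
      have huj : ∀ j, j ≠ i → u' j = u j := by
        intro j hj; simp [hu', Function.update_of_ne hj]
      have hadj : (Qcube h).Adj u u' := by
        rw [qcube_adj, hammingDist_eq_card]
        rw [Finset.card_eq_one]
        refine ⟨i, ?_⟩
        ext j
        simp only [mem_filter, mem_univ, true_and, mem_singleton]
        constructor
        · intro hj
          by_contra hji
          exact hj ((huj j hji).symm)
        · rintro rfl
          rw [hui]; exact hi
      have h2 : (Finset.univ.filter fun j => u' j ≠ w j)
          = (Finset.univ.filter fun j => u j ≠ w j).erase i := by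
        ext j
        simp only [mem_filter, mem_univ, true_and, mem_erase]
        constructor
        · intro hj
          have hji : j ≠ i := by rintro rfl; rw [hui] at hj; exact hj rfl
          rw [huj j hji] at hj
          exact ⟨hji, hj⟩
        · rintro ⟨hji, hj⟩
          rwa [huj j hji]
      have h3 : hammingDist u' w = n := by
        rw [hammingDist_eq_card, h2, Finset.card_erase_of_mem (by simp [hi]),
          ← hammingDist_eq_card, hn]
        omega
      obtain ⟨p, hp⟩ := exists_qwalk n u' w h3
      exact ⟨Walk.cons hadj p, by simp [hp]⟩

lemma qcube_preconnected {h : ℕ} : (Qcube h).Preconnected := by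
  intro u w
  obtain ⟨p, _⟩ := exists_qwalk (hammingDist u w) u w rfl
  exact ⟨p⟩

lemma hamming_le_walk {h : ℕ} {u w : Fin h → Bool} (p : (Qcube h).Walk u w) :
    hammingDist u w ≤ p.length := by
  induction p with
  | nil => simp
  | cons hadj p ih =>
    rw [qcube_adj] at hadj
    calc hammingDist _ _ ≤ hammingDist _ _ + hammingDist _ _ := hammingDist_triangle _ _ _
    _ ≤ 1 + p.length := by rw [hadj]; omega
    _ = (Walk.cons _ p).length := by simp [Walk.length_cons]; omega

lemma qcube_dist {h : ℕ} (u w : Fin h → Bool) :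
    (Qcube h).dist u w = hammingDist u w := by
  apply le_antisymm
  · obtain ⟨p, hp⟩ := exists_qwalk (hammingDist u w) u w rfl
    calc (Qcube h).dist u w ≤ p.length := SimpleGraph.dist_le p
    _ = hammingDist u w := hp
  · obtain ⟨p, hp⟩ := (qcube_preconnected u w).exists_walk_length_eq_dist
    rw [← hp]
    exact hamming_le_walk p

lemma iso_dist {V : Type*} {h : ℕ} {G : SimpleGraph V} (ψ : G ≃g Qcube h) (a b : V) :
    G.dist a b = hammingDist (ψ a) (ψ b) := by
  rw [← qcube_dist]
  have hr : (Qcube h).Reachable (ψ a) (ψ b) := qcube_preconnected _ _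
  apply le_antisymm
  · obtain ⟨p, hp⟩ := hr.exists_walk_length_eq_dist
    calc G.dist a b
        ≤ ((p.map ψ.symm.toHom).copy (ψ.symm_apply_apply a) (ψ.symm_apply_apply b)).length :=
          SimpleGraph.dist_le _
    _ = p.length := by simp
    _ = _ := hp
  · have hrG : G.Reachable a b := by
      obtain ⟨p⟩ := hr
      exact ⟨(p.map ψ.symm.toHom).copy (ψ.symm_apply_apply a) (ψ.symm_apply_apply b)⟩
    obtain ⟨p, hp⟩ := hrG.exists_walk_length_eq_dist
    calc (Qcube h).dist (ψ a) (ψ b) ≤ (p.map ψ.toHom).length := SimpleGraph.dist_le _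
    _ = p.length := by simp
    _ = _ := hp

lemma hamming_comp_perm {h : ℕ} (σ : Equiv.Perm (Fin h)) (x y : Fin h → Bool) :
    hammingDist (fun i => x (σ i)) (fun i => y (σ i)) = hammingDist x y := by
  rw [hammingDist_eq_card, hammingDist_eq_card]
  apply Finset.card_bij (fun i _ => σ i)
  · intro a ha
    simp only [mem_filter, mem_univ, true_and] at ha ⊢
    exact ha
  · intro a _ b _ hab
    exact σ.injective hab
  · intro b hb
    simp only [mem_filter, mem_univ, true_and] at hb
    exact ⟨σ.symm b, by simp only [mem_filter, mem_univ, true_and, Equiv.apply_symm_apply]; exact hb,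
      by simp⟩

lemma key_lemma {V : Type*} {h : ℕ} {G : SimpleGraph V} (ψ : G ≃g Qcube h) {v : V}
    (hv : ψ v = zeroW h) {α : V → Fin h → Bool} (hα : goodLabeling G v α) :
    ∃ σ : Equiv.Perm (Fin h), ∀ u i, α u i = ψ u (σ i) := by
  obtain ⟨hv0, hinj, hw1, hor⟩ := hα
  have hGdist : ∀ a b, G.dist a b = hammingDist (ψ a) (ψ b) := iso_dist ψ
  have hd : ∀ a, G.dist v a = hammingDist (zeroW h) (ψ a) := by
    intro a; rw [hGdist, hv]
  have hnbr : ∀ z, z ∈ G.neighborSet v ↔ hammingDist (zeroW h) (ψ z) = 1 := by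
    intro z
    rw [SimpleGraph.mem_neighborSet, ← ψ.map_adj_iff, hv, qcube_adj]
  have hzmem : ∀ j0 : Fin h, ψ.symm (eW j0) ∈ G.neighborSet v := by
    intro j0; rw [hnbr, ψ.apply_symm_apply]; exact wt_eW j0
  have hchoice : ∀ j : Fin h, ∃ k, α (ψ.symm (eW j)) = eW k := by
    intro j
    have h1 := hw1 _ (hzmem j)
    rw [show weightW (α (ψ.symm (eW j)))
        = hammingDist (zeroW h) (α (ψ.symm (eW j))) from (wt_eq _).symm] at h1
    exact weight_one_iff.mp h1
  choose f hf using hchoice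
  have eWinj : Function.Injective (eW (h := h)) := by
    intro j j' hjj
    have hj := congrFun hjj j
    simp [eW] at hj
    exact hj
  have finj : Function.Injective f := by
    intro j j' hjj
    have h1 : α (ψ.symm (eW j)) = α (ψ.symm (eW j')) := by rw [hf, hf, hjj]
    have h2 := hinj (hzmem j) (hzmem j') h1
    have h3 : eW j = eW j' := ψ.symm.injective h2
    exact eWinj h3
  set σ0 : Equiv.Perm (Fin h) := Equiv.ofBijective f (Finite.injective_iff_bijective.mp finj)
    with hσ0
  have hσ0app : ∀ j, σ0 j = f j := fun j => rfl
  refine ⟨σ0.symm, ?_⟩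
  have key0 : ∀ n (u : V), hammingDist (zeroW h) (ψ u) = n → ∀ i, α u i = ψ u (σ0.symm i) := by
    intro n
    induction n using Nat.strong_induction_on with
    | _ n ih =>
      intro u hn i
      rcases n with _ | _ | n
      · have h0 : ψ u = zeroW h := (hammingDist_eq_zero.mp hn).symm
        have huv : u = v := ψ.injective (h0.trans hv.symm)
        subst huv
        rw [hv0, hv]
        rfl
      · obtain ⟨j, hj⟩ := weight_one_iff.mp hn
        have hu : u = ψ.symm (eW j) := by rw [← hj, ψ.symm_apply_apply]
        rw [hu, hf j, ψ.apply_symm_apply]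
        show decide (i = f j) = decide (σ0.symm i = j)
        rw [decide_eq_decide]
        constructor
        · rintro rfl
          exact σ0.symm_apply_apply j
        · intro hij
          calc i = σ0 (σ0.symm i) := (σ0.apply_symm_apply i).symm
          _ = σ0 j := by rw [hij]
          _ = f j := rfl
      · have hunot : u ∉ insert v (G.neighborSet v) := by
          intro hmem
          rcases Set.mem_insert_iff.mp hmem with rfl | hmem2
          · rw [hv, hammingDist_self] at hn; omega
          · rw [hnbr] at hmem2
            rw [hn] at hmem2
            omega
        have hiff := hor u hunot i
        rw [Bool.eq_iff_iff, hiff]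
        constructor
        · rintro ⟨z, ⟨hadj, hdz⟩, hzi⟩
          rw [hd, hd] at hdz
          have hwz : hammingDist (zeroW h) (ψ z) = n + 1 := by rw [hn] at hdz; omega
          have hstep : ∀ i', ψ z i' = true → ψ u i' = true := by
            apply step_le
            · exact qcube_adj.mp (ψ.map_adj_iff.mpr hadj.symm)
            · rw [hwz, hn]
          have hrec := ih (n+1) (by omega) z hwz i
          rw [hrec] at hzi
          exact hstep _ hzi
        · intro hui
          set k := σ0.symm i with hk
          have hkA : k ∈ Finset.univ.filter (fun j => ψ u j = true) := by simp [hui]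
          have hcard : (Finset.univ.filter (fun j => ψ u j = true)).card = n + 2 := by
            rw [← wt_eq, hn]
          have hex : ((Finset.univ.filter (fun j => ψ u j = true)).erase k).Nonempty := by
            rw [← Finset.card_pos, Finset.card_erase_of_mem hkA, hcard]; omega
          obtain ⟨m, hm⟩ := hex
          obtain ⟨hmk, hmA⟩ := Finset.mem_erase.mp hm
          have hum : ψ u m = true := (Finset.mem_filter.mp hmA).2
          obtain ⟨hfact1, hfact2⟩ := update_facts hum
          set z := ψ.symm (Function.update (ψ u) m false) with hzdef
          have hψz : ψ z = Function.update (ψ u) m false := ψ.apply_symm_apply _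
          have hwx : hammingDist (zeroW h) (ψ z) = n + 1 := by
            rw [hψz]
            rw [hn] at hfact2
            omega
          refine ⟨z, ⟨?_, ?_⟩, ?_⟩
          · rw [← ψ.map_adj_iff, hψz, qcube_adj, hammingDist_comm]
            exact hfact1
          · rw [hd z, hd u, hψz]
            exact hfact2
          · have hrec := ih (n+1) (by omega) z hwx i
            rw [hrec, hψz]
            rw [Function.update_of_ne (fun e => hmk (hk ▸ e.symm))]
            exact hui
  exact fun u i => key0 (hammingDist (zeroW h) (ψ u)) u rfl i

end Helpers

/-- If `G` is isomorphic to `Q_h`, `v ∈ V(G)`, and `α` satisfies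
`α(v) = 0^h`, the neighbors of `v` get pairwise distinct weight-one labels, and
`α(u) = ∨_{z ∈ N^v(u)} α(z)` for all other `u`, then `α` is an isometric embedding
of `G` into `Q_h`; moreover it is the unique such map once fixed on `N[v]`. -/
theorem stmt_5 {V : Type*} (h : ℕ) (G : SimpleGraph V)
    (hG : Nonempty (G ≃g Qcube h)) (v : V) (α : V → Fin h → Bool)
    (hα : goodLabeling G v α) :
    IsIsomEmb G α ∧
    ∀ α' : V → Fin h → Bool, goodLabeling G v α' →
      (∀ z ∈ insert v (G.neighborSet v), α' z = α z) → α' = α := by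
  obtain ⟨φ⟩ := hG
  set c : Fin h → Bool := φ v with hc
  let e : (Fin h → Bool) ≃ (Fin h → Bool) :=
    { toFun := fun u i => xor (u i) (c i)
      invFun := fun u i => xor (u i) (c i)
      left_inv := fun u => funext fun i => by
        show xor (xor (u i) (c i)) (c i) = u i
        cases u i <;> cases c i <;> rfl
      right_inv := fun u => funext fun i => by
        show xor (xor (u i) (c i)) (c i) = u i
        cases u i <;> cases c i <;> rfl }
  have hxorham : ∀ u w : Fin h → Bool, hammingDist (e u) (e w) = hammingDist u w := by
    intro u w
    rw [hammingDist_eq_card, hammingDist_eq_card]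
    congr 1
    ext j
    simp only [Finset.mem_filter, Finset.mem_univ, true_and]
    show (xor (u j) (c j) ≠ xor (w j) (c j)) ↔ (u j ≠ w j)
    cases u j <;> cases w j <;> cases c j <;> simp
  let t : Qcube h ≃g Qcube h := ⟨e, by intro a b; rw [qcube_adj, qcube_adj, hxorham]⟩
  let ψ : G ≃g Qcube h := φ.trans t
  have hψv : ψ v = zeroW h := by
    funext i
    show xor (φ v i) (c i) = false
    rw [hc]
    exact Bool.xor_self _
  obtain ⟨σ, hσ⟩ := key_lemma ψ hψv hα
  have hGdist : ∀ a b, G.dist a b = hammingDist (ψ a) (ψ b) := iso_dist ψ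
  constructor
  · intro a b
    have e1 : α a = fun i => ψ a (σ i) := funext fun i => hσ a i
    have e2 : α b = fun i => ψ b (σ i) := funext fun i => hσ b i
    rw [e1, e2, hamming_comp_perm, hGdist]
  · intro α' hα' hagree
    obtain ⟨σ', hσ'⟩ := key_lemma ψ hψv hα'
    funext u
    funext i
    rw [hσ u i, hσ' u i]
    suffices hs : σ' i = σ i by rw [hs]
    have hz : ψ.symm (eW (σ i)) ∈ G.neighborSet v := by
      rw [SimpleGraph.mem_neighborSet, ← ψ.map_adj_iff, hψv, qcube_adj, ψ.apply_symm_apply]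
      exact wt_eW _
    have hag := hagree _ (Set.mem_insert_iff.mpr (Or.inr hz))
    have h1 : α (ψ.symm (eW (σ i))) i = true := by
      rw [hσ, ψ.apply_symm_apply]
      simp [eW]
    have h2 : α' (ψ.symm (eW (σ i))) i = decide (σ' i = σ i) := by
      rw [hσ', ψ.apply_symm_apply]
      rfl
    rw [hag, h1] at h2
    exact of_decide_eq_true h2.symm
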